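/- Let τ : C(V_ℂ) → ℂ be any linear functional with τ(1) = 1, τ ∘ Γ = τ, and τ(ab) = τ(ba) for all a, b ∈ C(V_ℂ), and let * denote the unique conjugate-linear anti-automorphism of C(V_ℂ) restricting on V_ℂ to the canonical conjugation. Then the sesquilinear form ⟨a|b⟩ = τ(a* b) is a complex inner product on C(V_ℂ): for every a ∈ C(V_ℂ), τ(a* a) is a nonnegative real number, and τ(a* a) = 0 only if a = 0. -/

import Mathlib

noncomputable section
open TensorProduct ComplexConjugate

variable (V : Type*) [NormedAddCommGroup V] [InnerProductSpace ℝ V]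

/-- The complexification `V_ℂ = ℂ ⊗[ℝ] V` of a real inner product space `V`. -/
abbrev Complexification : Type _ := ℂ ⊗[ℝ] V

variable {V}

/-- The canonical embedding of `V` into its complexification. -/
def incl (v : V) : Complexification V := (1 : ℂ) ⊗ₜ[ℝ] v

/-- The canonical conjugation `w ↦ w̄` on the complexification. -/
def conjC : Complexification V →ₗ[ℝ] Complexification V :=
  TensorProduct.map Complex.conjAe.toLinearMap LinearMap.id

variable (V)

/-- The complex-bilinear extension `(·|·)` of the real inner product to the complexification. -/
def bilinC : LinearMap.BilinForm ℂ (Complexification V) :=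
  LinearMap.BilinForm.baseChange ℂ (innerₗ V)

/-- The quadratic form `z ↦ (z|z)` on the complexification; `C(V_ℂ)` is its Clifford algebra. -/
def quadC : QuadraticForm ℂ (Complexification V) :=
  LinearMap.BilinMap.toQuadraticMap (bilinC V)

variable {V}

/-- The hermitian inner product `⟨x|y⟩ = (x̄|y)` on the complexification. -/
def hermC (x y : Complexification V) : ℂ := bilinC V (conjC x) y

/-- `⟨x|y⟩_J = (x|y) + i (Jx|y)`. -/
def innerJ (J : V →ₗ[ℝ] V) (x y : V) : ℂ :=
  ((inner ℝ x y : ℝ) : ℂ) + Complex.I * ((inner ℝ (J x) y : ℝ) : ℂ)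

/-- `v⁺ = (v - iJv)/√2`. -/
def plusPart (J : V →ₗ[ℝ] V) (v : V) : Complexification V :=
  ((Real.sqrt 2 : ℂ))⁻¹ • (incl v - Complex.I • incl (J v))

/-- `v⁻ = (v + iJv)/√2`. -/
def minusPart (J : V →ₗ[ℝ] V) (v : V) : Complexification V :=
  ((Real.sqrt 2 : ℂ))⁻¹ • (incl v + Complex.I • incl (J v))



section ListLemmas
variable {A : Type*} [Ring A] [Algebra ℂ A] {ι : Type*} [LinearOrder ι]
variable (x : ι → A)

/-- Monomial: product of generators along a list. -/
def cmon (l : List ι) : A := (l.map x).prod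

lemma cmon_nil : cmon x ([] : List ι) = 1 := rfl
lemma cmon_cons (a : ι) (l : List ι) : cmon x (a :: l) = x a * cmon x l := by
  simp [cmon]
lemma cmon_singleton (a : ι) : cmon x [a] = x a := by simp [cmon]
lemma cmon_append (l₁ l₂ : List ι) : cmon x (l₁ ++ l₂) = cmon x l₁ * cmon x l₂ := by
  simp [cmon]

variable (hsq : ∀ i, x i * x i = 1)
  (hanti : ∀ i j : ι, i ≠ j → x i * x j = -(x j * x i))

include hsq in
lemma cmon_rev_mul (l : List ι) : cmon x l.reverse * cmon x l = 1 := by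
  induction l with
  | nil => simp [cmon]
  | cons a t ih =>
      simp only [List.reverse_cons, cmon_append, cmon_cons, cmon_nil, mul_one]
      calc cmon x t.reverse * x a * (x a * cmon x t)
          = cmon x t.reverse * ((x a * x a) * cmon x t) := by
            rw [mul_assoc, ← mul_assoc (x a)]
        _ = 1 := by rw [hsq, one_mul, ih]

include hanti in
lemma cmon_move (a : ι) : ∀ (l : List ι), a ∉ l →
    cmon x l * x a = ((-1 : ℂ)^l.length) • (x a * cmon x l) := by
  intro l
  induction l with
  | nil => intro _; simp [cmon]
  | cons b t ih =>
      intro ha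
      have hab : a ≠ b := by simp at ha; tauto
      have hat : a ∉ t := by simp at ha; tauto
      rw [cmon_cons, mul_assoc, ih hat, mul_smul_comm]
      have h1 : x b * (x a * cmon x t) = -(x a * (x b * cmon x t)) := by
        rw [← mul_assoc, hanti b a (Ne.symm hab), neg_mul, mul_assoc]
      rw [h1, List.length_cons, pow_succ, mul_smul, neg_one_smul, smul_neg]

include hsq hanti in
lemma cmon_insert : ∀ (l : List ι), l.Pairwise (· < ·) → ∀ a : ι,
    ∃ (ε : ℂ) (l' : List ι), (ε = 1 ∨ ε = -1) ∧ l'.Pairwise (· < ·) ∧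
      (∀ i, i ∈ l' ↔ ((i ∈ l ∧ i ≠ a) ∨ (i ∉ l ∧ i = a))) ∧
      x a * cmon x l = ε • cmon x l' := by
  intro l
  induction l with
  | nil =>
      intro _ a
      exact ⟨1, [a], Or.inl rfl, List.pairwise_singleton _ a, by simp, by simp [cmon]⟩
  | cons b t ih =>
      intro hs a
      rw [List.pairwise_cons] at hs
      obtain ⟨hbt, hts⟩ := hs
      rcases lt_trichotomy a b with hab | hab | hab
      · refine ⟨1, a :: b :: t, Or.inl rfl, ?_, ?_, by simp [cmon_cons]⟩
        · rw [List.pairwise_cons]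
          refine ⟨?_, by rw [List.pairwise_cons]; exact ⟨hbt, hts⟩⟩
          intro c hc
          rcases List.mem_cons.mp hc with h | h
          · exact h ▸ hab
          · exact hab.trans (hbt c h)
        · intro i
          have hanl : a ∉ b :: t := by
            intro h
            rcases List.mem_cons.mp h with h | h
            · exact absurd (h ▸ hab) (lt_irrefl b)
            · exact absurd (hab.trans (hbt a h)) (lt_irrefl a)
          constructor
          · intro h
            rcases List.mem_cons.mp h with h2 | h2
            · exact Or.inr ⟨h2 ▸ hanl, h2⟩
            · refine Or.inl ⟨h2, ?_⟩; rintro rfl; exact hanl h2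
          · rintro (⟨h1, _⟩ | ⟨_, rfl⟩)
            · exact List.mem_cons_of_mem _ h1
            · exact List.mem_cons_self
      · subst hab
        have hat : a ∉ t := fun h => absurd (hbt a h) (lt_irrefl a)
        refine ⟨1, t, Or.inl rfl, hts, ?_, ?_⟩
        · intro i
          constructor
          · intro h
            have : i ≠ a := by rintro rfl; exact hat h
            exact Or.inl ⟨List.mem_cons_of_mem _ h, this⟩
          · rintro (⟨h1, h2⟩ | ⟨h1, rfl⟩)
            · rcases List.mem_cons.mp h1 with h | h
              · exact absurd h h2
              · exact h
            · exact absurd (List.mem_cons_self) h1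
        · rw [cmon_cons, ← mul_assoc, hsq, one_mul, one_smul]
      · obtain ⟨ε₁, l₁, hε₁, hl₁s, hl₁m, hl₁e⟩ := ih hts a
        refine ⟨-ε₁, b :: l₁, ?_, ?_, ?_, ?_⟩
        · rcases hε₁ with h | h <;> simp [h]
        · rw [List.pairwise_cons]
          refine ⟨?_, hl₁s⟩
          intro c hc
          rcases (hl₁m c).mp hc with ⟨h, _⟩ | ⟨_, rfl⟩
          · exact hbt c h
          · exact hab
        · intro i
          have hbm := hl₁m i
          by_cases hib : i = b
          · subst hib
            have hia : i ≠ a := by rintro rfl; exact absurd hab (lt_irrefl i)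
            simp [hia]
          · simp only [List.mem_cons, hib, false_or]
            rw [hbm]
        · have hab' : a ≠ b := by rintro rfl; exact absurd hab (lt_irrefl a)
          rw [cmon_cons, ← mul_assoc, hanti a b hab', cmon_cons]
          rw [neg_mul, mul_assoc, hl₁e, mul_smul_comm, neg_smul, ← neg_smul]

include hsq hanti in
lemma cmon_reduce : ∀ (l : List ι),
    ∃ (ε : ℂ) (l' : List ι), (ε = 1 ∨ ε = -1) ∧ l'.Pairwise (· < ·) ∧
      (∀ i, i ∈ l' ↔ Odd (l.count i)) ∧ cmon x l = ε • cmon x l' := by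
  intro l
  induction l with
  | nil =>
      refine ⟨1, [], Or.inl rfl, List.Pairwise.nil, ?_, by simp⟩
      simp [Nat.odd_iff]
  | cons a t ih =>
      obtain ⟨ε₁, l₁, hε₁, hl₁s, hl₁m, hl₁e⟩ := ih
      obtain ⟨ε₂, l₂, hε₂, hl₂s, hl₂m, hl₂e⟩ := cmon_insert x hsq hanti l₁ hl₁s a
      refine ⟨ε₁ * ε₂, l₂, ?_, hl₂s, ?_, ?_⟩
      · rcases hε₁ with h | h <;> rcases hε₂ with h' | h' <;> simp [h, h']
      · intro i
        rw [hl₂m i]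
        have hm := hl₁m i
        by_cases hia : i = a
        · subst hia
          simp only [ne_eq, not_true_eq_false, and_false, false_or, and_true]
          rw [List.count_cons_self]
          rw [hm]
          rw [Nat.odd_iff, Nat.odd_iff]
          omega
        · simp only [hia, and_false, or_false, ne_eq, hia, not_false_eq_true, and_true]
          rw [hm, List.count_cons_of_ne (Ne.symm hia)]
      · rw [cmon_cons, hl₁e, mul_smul_comm, hl₂e, smul_smul]

end ListLemmas

section TraceLemmas
variable {A : Type*} [Ring A] [Algebra ℂ A] {ι : Type*} [LinearOrder ι]
variable (x : ι → A) (τ : A →ₗ[ℂ] ℂ)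
variable (hsq : ∀ i, x i * x i = 1)
  (hanti : ∀ i j : ι, i ≠ j → x i * x j = -(x j * x i))
  (hτone : τ 1 = 1)
  (hτtr : ∀ a b : A, τ (a * b) = τ (b * a))
  (hτodd : ∀ l : List ι, Odd l.length → τ (cmon x l) = 0)

include hanti hτtr hτodd in
lemma cmon_trace_zero (l : List ι) (hs : l.Pairwise (· < ·)) (hne : l ≠ []) :
    τ (cmon x l) = 0 := by
  rcases Nat.even_or_odd l.length with he | ho
  · cases l with
    | nil => exact absurd rfl hne
    | cons a t =>
        rw [List.pairwise_cons] at hs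
        have hat : a ∉ t := fun h => absurd (hs.1 a h) (lt_irrefl a)
        have hodd : Odd t.length := by
          rw [List.length_cons, Nat.even_add_one] at he
          exact Nat.not_even_iff_odd.mp he
        have h1 : τ (cmon x (a :: t)) = τ (cmon x t * x a) := by
          rw [cmon_cons]; exact hτtr _ _
        rw [cmon_move x hanti a t hat, Odd.neg_one_pow hodd, map_smul, ← cmon_cons] at h1
        have h2 : (2 : ℂ) * τ (cmon x (a :: t)) = 0 := by
          have : τ (cmon x (a :: t)) = -τ (cmon x (a :: t)) := by
            simpa using h1
          linear_combination this
        exact (mul_eq_zero.mp h2).resolve_left two_ne_zero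
  · exact hτodd l ho

include hsq hanti hτone hτtr hτodd in
lemma cmon_gram (s t : Finset ι) :
    τ (cmon x ((Finset.sort s (· ≤ ·)).reverse) * cmon x (Finset.sort t (· ≤ ·)))
      = if s = t then 1 else 0 := by
  classical
  by_cases hst : s = t
  · subst hst
    rw [cmon_rev_mul x hsq, hτone, if_pos rfl]
  · rw [if_neg hst, ← cmon_append]
    obtain ⟨ε, l', hε, hl's, hl'm, hl'e⟩ :=
      cmon_reduce x hsq hanti ((Finset.sort s (· ≤ ·)).reverse ++ Finset.sort t (· ≤ ·))
    have hex : ∃ i, (i ∈ s ∧ i ∉ t) ∨ (i ∉ s ∧ i ∈ t) := by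
      by_contra h
      push_neg at h
      exact hst (Finset.ext fun i => by have := h i; tauto)
    obtain ⟨i, hi⟩ := hex
    have hcnt : Odd (((Finset.sort s (· ≤ ·)).reverse ++ Finset.sort t (· ≤ ·)).count i) := by
      rw [List.count_append, (List.reverse_perm _).count_eq]
      rcases hi with ⟨h1, h2⟩ | ⟨h1, h2⟩
      · rw [List.count_eq_one_of_mem (Finset.sort_nodup _ _) ((Finset.mem_sort _).mpr h1),
          List.count_eq_zero_of_not_mem (fun hc => h2 ((Finset.mem_sort _).mp hc))]
        decide
      · rw [List.count_eq_one_of_mem (Finset.sort_nodup _ _) ((Finset.mem_sort _).mpr h2),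
          List.count_eq_zero_of_not_mem (fun hc => h1 ((Finset.mem_sort _).mp hc))]
        decide
    have hmem : i ∈ l' := (hl'm i).mpr hcnt
    have hne : l' ≠ [] := List.ne_nil_of_mem hmem
    rw [hl'e, map_smul, cmon_trace_zero x τ hanti hτtr hτodd l' hl's hne, smul_zero]

end TraceLemmas

section Concrete

lemma bilinC_incl_incl (u v : V) :
    bilinC V (incl u) (incl v) = ((inner ℝ u v : ℝ) : ℂ) := by
  simp only [bilinC, incl, LinearMap.BilinForm.baseChange_tmul,
    innerₗ_apply_apply, mul_one]
  rw [Complex.real_smul, mul_one]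

lemma conjC_incl (v : V) : conjC (incl v) = incl v := by
  simp [conjC, incl]

end Concrete


/-- for any normalized grade-invariant tracial functional `τ` on `C(V_ℂ)`
and the (unique) conjugate-linear anti-automorphism `S` of `C(V_ℂ)` restricting on `V_ℂ`
to the canonical conjugation, the sesquilinear form `⟨a|b⟩ = τ(a* b)` is a complex inner
product: `τ(a* a)` is a nonnegative real number, vanishing only for `a = 0`. -/
theorem trace_inner_product_positive_definite
    [FiniteDimensional ℝ V]
    (τ : CliffordAlgebra (quadC V) →ₗ[ℂ] ℂ)
    (hτone : τ 1 = 1)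
    (hτΓ : ∀ a, τ (CliffordAlgebra.involute a) = τ a)
    (hτtr : ∀ a b, τ (a * b) = τ (b * a))
    (S : CliffordAlgebra (quadC V) →ₗ[ℝ] CliffordAlgebra (quadC V))
    (hSone : S 1 = 1)
    (hSsmul : ∀ (z : ℂ) (a : CliffordAlgebra (quadC V)), S (z • a) = (starRingEnd ℂ) z • S a)
    (hSmul : ∀ a b : CliffordAlgebra (quadC V), S (a * b) = S b * S a)
    (hSι : ∀ w : Complexification V,
      S (CliffordAlgebra.ι (quadC V) w) = CliffordAlgebra.ι (quadC V) (conjC w)) :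
    ∀ a : CliffordAlgebra (quadC V),
      (0 ≤ (τ (S a * a)).re ∧ (τ (S a * a)).im = 0) ∧ (τ (S a * a) = 0 → a = 0) := by
  classical
  set n := Module.finrank ℝ V with hn
  let e : OrthonormalBasis (Fin n) ℝ V := stdOrthonormalBasis ℝ V
  let w : Fin n → Complexification V := fun i => incl (e i)
  let x : Fin n → CliffordAlgebra (quadC V) := fun i => CliffordAlgebra.ι (quadC V) (w i)
  have he : ∀ i j, (inner ℝ (e i) (e j) : ℝ) = if i = j then 1 else 0 :=
    fun i j => orthonormal_iff_ite.mp e.orthonormal i j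
  have hb : ∀ i j, bilinC V (w i) (w j) = if i = j then 1 else 0 := by
    intro i j
    rw [show w i = incl (e i) from rfl, show w j = incl (e j) from rfl,
      bilinC_incl_incl, he i j]
    split <;> simp
  have hsq : ∀ i, x i * x i = 1 := by
    intro i
    rw [show x i = CliffordAlgebra.ι (quadC V) (w i) from rfl, CliffordAlgebra.ι_sq_scalar]
    have hq : quadC V (w i) = 1 := by
      rw [quadC, LinearMap.BilinMap.toQuadraticMap_apply, hb i i, if_pos rfl]
    rw [hq, map_one]
  have hanti : ∀ i j : Fin n, i ≠ j → x i * x j = -(x j * x i) := by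
    intro i j hij
    have h := CliffordAlgebra.ι_mul_ι_add_swap (Q := quadC V) (w i) (w j)
    have hp : QuadraticMap.polar (quadC V) (w i) (w j) = 0 := by
      rw [quadC, LinearMap.BilinMap.polar_toQuadraticMap, hb i j, hb j i,
        if_neg hij, if_neg (Ne.symm hij), add_zero]
    rw [hp, map_zero] at h
    exact eq_neg_of_add_eq_zero_left h
  -- the monomial family
  let m : Finset (Fin n) → CliffordAlgebra (quadC V) := fun s => cmon x (s.sort (· ≤ ·))
  -- grade automorphism on monomials
  have hinv : ∀ l : List (Fin n),
      CliffordAlgebra.involute (cmon x l) = ((-1 : ℂ) ^ l.length) • cmon x l := by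
    intro l
    induction l with
    | nil => simp [cmon_nil]
    | cons a t ih =>
        rw [cmon_cons, map_mul, ih, show CliffordAlgebra.involute (x a)
            = -(x a) from CliffordAlgebra.involute_ι _,
          List.length_cons, pow_succ]
        rw [neg_mul, mul_smul_comm, mul_comm ((-1 : ℂ) ^ t.length), mul_smul, neg_one_smul]
  have hτodd : ∀ l : List (Fin n), Odd l.length → τ (cmon x l) = 0 := by
    intro l hl
    have h := hτΓ (cmon x l)
    rw [hinv l, Odd.neg_one_pow hl, map_smul] at h
    have h2 : (2 : ℂ) * τ (cmon x l) = 0 := by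
      have h' : -τ (cmon x l) = τ (cmon x l) := by simpa using h
      linear_combination -h'
    exact (mul_eq_zero.mp h2).resolve_left two_ne_zero
  -- S on monomials
  have hSx : ∀ i, S (x i) = x i := by
    intro i
    rw [show x i = CliffordAlgebra.ι (quadC V) (w i) from rfl, hSι,
      show conjC (w i) = w i from conjC_incl (e i)]
  have hSmon : ∀ l : List (Fin n), S (cmon x l) = cmon x l.reverse := by
    intro l
    induction l with
    | nil => rw [cmon_nil, hSone, List.reverse_nil, cmon_nil]
    | cons a t ih =>
        rw [cmon_cons, hSmul, ih, hSx, List.reverse_cons, cmon_append, cmon_singleton]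
  -- spanning
  set P : Submodule ℂ (CliffordAlgebra (quadC V)) := Submodule.span ℂ (Set.range m) with hP
  have hone_mem : (1 : CliffordAlgebra (quadC V)) ∈ Set.range m :=
    ⟨∅, by simp [m, Finset.sort_empty, cmon_nil]⟩
  have hsorted_mem : ∀ l : List (Fin n), l.Pairwise (· < ·) → cmon x l ∈ Set.range m := by
    intro l hl
    refine ⟨l.toFinset, ?_⟩
    have : Finset.sort l.toFinset (· ≤ ·) = l :=
      (List.toFinset_sort (· ≤ ·) hl.nodup).mpr (hl.imp le_of_lt)
    simp only [m, this]
  have hkey : ∀ s t : Finset (Fin n), m s * m t ∈ P := by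
    intro s t
    have hms : m s * m t = cmon x (s.sort (· ≤ ·) ++ t.sort (· ≤ ·)) := (cmon_append x _ _).symm
    rw [hms]
    obtain ⟨ε, l', hε, hl's, _, hl'e⟩ := cmon_reduce x hsq hanti (s.sort (· ≤ ·) ++ t.sort (· ≤ ·))
    rw [hl'e]
    exact Submodule.smul_mem _ _ (Submodule.subset_span (hsorted_mem l' hl's))
  have hmul : ∀ u ∈ P, ∀ v ∈ P, u * v ∈ P := by
    intro u hu
    refine Submodule.span_induction (p := fun u _ => ∀ v ∈ P, u * v ∈ P) ?_ ?_ ?_ ?_ hu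
    · rintro _ ⟨s, rfl⟩ v hv
      refine Submodule.span_induction (p := fun v _ => m s * v ∈ P) ?_ ?_ ?_ ?_ hv
      · rintro _ ⟨t, rfl⟩; exact hkey s t
      · simp
      · intro v₁ v₂ _ _ h1 h2; rw [mul_add]; exact Submodule.add_mem _ h1 h2
      · intro c v₁ _ h1; rw [mul_smul_comm]; exact Submodule.smul_mem _ _ h1
    · intro v _; simp
    · intro u₁ u₂ _ _ h1 h2 v hv
      rw [add_mul]; exact Submodule.add_mem _ (h1 v hv) (h2 v hv)
    · intro c u₁ _ h1 v hv
      rw [smul_mul_assoc]; exact Submodule.smul_mem _ _ (h1 v hv)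
  have hspan : ∀ a : CliffordAlgebra (quadC V), a ∈ P := by
    intro a
    induction a using CliffordAlgebra.induction with
    | algebraMap r =>
        rw [Algebra.algebraMap_eq_smul_one]
        exact Submodule.smul_mem _ _ (Submodule.subset_span hone_mem)
    | ι v =>
        let b : Module.Basis (Fin n) ℂ (Complexification V) := Module.Basis.baseChange ℂ e.toBasis
        have hbw : ∀ i, b i = w i := fun i => by
          rw [Module.Basis.baseChange_apply, OrthonormalBasis.coe_toBasis]
          rfl
        have hv : CliffordAlgebra.ι (quadC V) v
            = ∑ i, b.repr v i • x i := by
          conv_lhs => rw [← b.sum_repr v]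
          rw [map_sum]
          refine Finset.sum_congr rfl fun i _ => ?_
          rw [map_smul, hbw]
        rw [hv]
        refine Submodule.sum_mem _ fun i _ => Submodule.smul_mem _ _ ?_
        refine Submodule.subset_span ⟨{i}, ?_⟩
        simp [m, Finset.sort_singleton, cmon_singleton]
    | mul a b ha hb => exact hmul a ha b hb
    | add a b ha hb => exact Submodule.add_mem _ ha hb
  -- the Gram identity
  have hgram : ∀ s t : Finset (Fin n), τ (S (m s) * m t) = if s = t then 1 else 0 := by
    intro s t
    rw [show S (m s) = cmon x (s.sort (· ≤ ·)).reverse from hSmon _]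
    have h := cmon_gram x τ hsq hanti hτone hτtr hτodd s t
    convert h using 2
  -- final computation
  intro a
  obtain ⟨c, hc⟩ := Submodule.mem_span_range_iff_exists_fun ℂ |>.mp (hspan a)
  have hSa : S a = ∑ s, (starRingEnd ℂ) (c s) • S (m s) := by
    rw [← hc, map_sum]
    exact Finset.sum_congr rfl fun s _ => hSsmul _ _
  have key : τ (S a * a) = ((∑ s, Complex.normSq (c s) : ℝ) : ℂ) := by
    rw [hSa]
    conv_lhs => rw [← hc]
    rw [Finset.sum_mul_sum]
    rw [map_sum]
    have hterm : ∀ s : Finset (Fin n),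
        τ (∑ t, ((starRingEnd ℂ) (c s) • S (m s)) * (c t • m t))
          = (starRingEnd ℂ) (c s) * c s := by
      intro s
      rw [map_sum]
      rw [Finset.sum_eq_single s]
      · rw [smul_mul_smul_comm, map_smul, hgram s s, if_pos rfl, smul_eq_mul, mul_one]
      · intro t _ hts
        rw [smul_mul_smul_comm, map_smul, hgram s t, if_neg (Ne.symm hts), smul_zero]
      · intro h; exact absurd (Finset.mem_univ s) h
    rw [Finset.sum_congr rfl fun s _ => hterm s]
    rw [Complex.ofReal_sum]
    exact Finset.sum_congr rfl fun s _ => by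
      rw [Complex.normSq_eq_conj_mul_self]
  constructor
  · constructor
    · rw [key, Complex.ofReal_re]
      exact Finset.sum_nonneg fun s _ => Complex.normSq_nonneg _
    · rw [key, Complex.ofReal_im]
  · intro h
    rw [key, Complex.ofReal_eq_zero] at h
    have hz := (Finset.sum_eq_zero_iff_of_nonneg
      (fun s _ => Complex.normSq_nonneg (c s))).mp h
    rw [← hc]
    refine Finset.sum_eq_zero fun s _ => ?_
    rw [Complex.normSq_eq_zero.mp (hz s (Finset.mem_univ s)), zero_smul]
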